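/- Fix integers n ≥ 1, T ≥ 1 and set K = 1 (one FDC). Assume 0 < a ≤ b, a ≤ c_{k,t}^i ≤ b for k ∈ {0,1} and all i, t, f_0 ≥ 0, and f_1 > 0. Let m be the plan produced by the Cost-Comparison AdjV-Priority policy: with I_t^i = I_0^i − Σ_{τ=1}^{t} m_{1,τ}^i, set m̂_{1,t}^i = min{S_t^i, I_{t−1}^i} if c_{1,t}^i < √(a/b)·c_{0,t}^i and m̂_{1,t}^i = 0 otherwise, and m̂_{0,t}^i = S_t^i − m̂_{1,t}^i; at each period t, if f_0·𝟙(Σ_{i=1}^{n} m̂_{0,t}^i > 0) + f_1·𝟙(Σ_{i=1}^{n} m̂_{1,t}^i > 0) + Σ_{i=1}^{n} ( c_{0,t}^i·m̂_{0,t}^i + c_{1,t}^i·m̂_{1,t}^i ) > f_0 + Σ_{i=1}^{n} c_{0,t}^i·S_t^i, then m_{0,t}^i = S_t^i and m_{1,t}^i = 0 for all i; otherwise m_{k,t}^i = m̂_{k,t}^i for all i and k ∈ {0,1}. Then for every feasible plan m*, Cost(m) ≤ ( 1 + max{ f_0/f_1 , √(b/a) } ) · Cost(m*). -/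

import Mathlib

open Finset

/-- Total fulfillment cost of a single-FDC plan `m` (index `1` is the FDC, index `0`
the RDC) over `T` periods with `n` items, fixed costs `f` and variable costs `c`. -/
noncomputable def fulfillCost (n T : ℕ) (f : ℕ → ℝ) (c : ℕ → ℕ → ℕ → ℝ)
    (m : ℕ → ℕ → ℕ → ℝ) : ℝ :=
  ∑ t ∈ Finset.Icc 1 T, ∑ k ∈ Finset.Icc 0 1,
    (f k * (if 0 < ∑ i ∈ Finset.Icc 1 n, m k t i then (1 : ℝ) else 0)
      + ∑ i ∈ Finset.Icc 1 n, c k t i * m k t i)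

/-- Feasibility of a single-FDC plan. -/
def feasiblePlan (n T : ℕ) (S : ℕ → ℕ → ℝ) (I0 : ℕ → ℝ)
    (m : ℕ → ℕ → ℕ → ℝ) : Prop :=
  (∀ k ∈ Finset.Icc 0 1, ∀ t ∈ Finset.Icc 1 T, ∀ i ∈ Finset.Icc 1 n, 0 ≤ m k t i) ∧
  (∀ t ∈ Finset.Icc 1 T, ∀ i ∈ Finset.Icc 1 n, m 0 t i + m 1 t i = S t i) ∧
  (∀ i ∈ Finset.Icc 1 n, ∑ t ∈ Finset.Icc 1 T, m 1 t i ≤ I0 i)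



lemma attr_ineq (ρ a c0 c1 I' q0 q1 u : ℝ)
    (hρ : 1 ≤ ρ) (ha : 0 < a)
    (hac1 : a ≤ c1) (hc0b : c0 ≤ ρ^2 * a)
    (hattr : ρ * c1 ≤ c0)
    (hI' : 0 ≤ I') (hq0 : 0 ≤ q0) (hq1 : 0 ≤ q1)
    (hu0 : 0 ≤ u) (huF : u ≤ min (q0 + q1) I') :
    c0 * ((q0 + q1) - min (q0 + q1) I') + c1 * min (q0 + q1) I'
      + (ρ*(ρ-1)*a) * ((u - min u (q1 - max 0 (q1 - I'))) - max 0 (q1 - I'))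
      ≤ ρ * (c0 * q0 + c1 * q1) := by
  have hρ0 : (0:ℝ) ≤ ρ := le_trans zero_le_one hρ
  have hc1a : 0 < c1 := lt_of_lt_of_le ha hac1
  have hc0a : a ≤ c0 := by nlinarith
  have hc00 : (0:ℝ) ≤ c0 := le_trans ha.le hc0a
  set F := min (q0 + q1) I' with hF
  set e := max 0 (q1 - I') with he
  set w := min u (q1 - e) with hw
  have f1 : 0 ≤ e := le_max_left _ _
  have f2 : e ≤ q1 := max_le hq1 (by linarith)
  have hFle1 : F ≤ q0 + q1 := min_le_left _ _
  have hFle2 : F ≤ I' := min_le_right _ _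
  have f3 : e ≤ (q0 + q1) - F := by
    apply max_le
    · linarith
    · linarith
  have f4 : (q0 + q1) - F ≤ q0 + e := by
    rcases le_total (q0 + q1) I' with h | h
    · rw [hF, min_eq_left h]; linarith
    · rw [hF, min_eq_right h]
      have := le_max_right 0 (q1 - I')
      linarith
  have f5 : w ≤ u := min_le_left _ _
  have f6 : u - w ≤ q0 - ((q0 + q1) - F - e) := by
    rcases le_total u (q1 - e) with h | h
    · rw [hw, min_eq_left h]; linarith
    · rw [hw, min_eq_right h]; linarith
  have hlam0 : 0 ≤ ρ*(ρ-1)*a := mul_nonneg (mul_nonneg hρ0 (by linarith)) ha.le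
  have hρ2 : 1 ≤ ρ^2 := by nlinarith
  have hfac : ρ*(ρ-1)*a ≤ ρ*c0 - c1 := by nlinarith [mul_le_mul_of_nonneg_left hattr hρ0]
  have hA : (ρ*(ρ-1)*a) * (u - w) ≤ (ρ*c0 - c1) * (q0 - ((q0 + q1) - F - e)) := by
    have h0 : 0 ≤ u - w := by linarith
    calc (ρ*(ρ-1)*a) * (u - w) ≤ (ρ*c0 - c1) * (u - w) := mul_le_mul_of_nonneg_right hfac h0
      _ ≤ (ρ*c0 - c1) * (q0 - ((q0 + q1) - F - e)) := by
          apply mul_le_mul_of_nonneg_left f6 (by linarith)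
  have hB : (c0 - ρ*c1) * e ≤ (ρ*(ρ-1)*a) * e := by
    apply mul_le_mul_of_nonneg_right _ f1
    nlinarith
  have hC : 0 ≤ (ρ-1)*c0*((q0 + q1) - F - e) :=
    mul_nonneg (mul_nonneg (by linarith) hc00) (by linarith)
  have hD : 0 ≤ (ρ-1)*c1*(q1 - e) :=
    mul_nonneg (mul_nonneg (by linarith) hc1a.le) (by linarith)
  nlinarith [hA, hB, hC, hD]


lemma comb_lemma (T : ℕ) (I u q e : ℕ → ℝ)
    (hstep : ∀ t ∈ Icc 1 T, I t = I (t-1) - u t)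
    (hu0 : ∀ t ∈ Icc 1 T, 0 ≤ u t)
    (hq : ∀ t ∈ Icc 1 T, 0 ≤ q t)
    (he : ∀ t ∈ Icc 1 T, 0 ≤ e t ∧ e t ≤ max 0 (q t - I (t-1)))
    (hQ : ∑ t ∈ Icc 1 T, q t ≤ I 0)
    (hIT : 0 ≤ I T) :
    ∑ t ∈ Icc 1 T, (e t + min (u t) (q t - e t)) ≤ ∑ t ∈ Icc 1 T, u t := by
  have htel : ∀ N, N ≤ T → I 0 - I N = ∑ t ∈ Icc 1 N, u t := by
    intro N
    induction N with
    | zero => intro _; simp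
    | succ s ih =>
      intro h
      have hs : s ≤ T := le_trans (Nat.le_succ s) h
      have hmem : s + 1 ∈ Icc 1 T := mem_Icc.mpr ⟨Nat.succ_le_succ (Nat.zero_le _), h⟩
      rw [Finset.sum_Icc_succ_top (Nat.le_add_left 1 s), ← ih hs]
      have := hstep (s+1) hmem
      simp only [Nat.add_sub_cancel] at this
      rw [this]; ring
  have hmono : ∀ N, N ≤ T → I T ≤ I N := by
    intro N hN
    have h1 := htel N hN
    have h2 := htel T le_rfl
    have h3 : ∑ t ∈ Icc 1 N, u t ≤ ∑ t ∈ Icc 1 T, u t := by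
      apply Finset.sum_le_sum_of_subset_of_nonneg (Finset.Icc_subset_Icc_right hN)
      intro t ht _; exact hu0 t ht
    linarith
  have hInn : ∀ N, N ≤ T → 0 ≤ I N := fun N hN => le_trans hIT (hmono N hN)
  by_cases hz : ∀ t ∈ Icc 1 T, e t ≤ 0
  · apply Finset.sum_le_sum
    intro t ht
    have h0 : e t = 0 := le_antisymm (hz t ht) (he t ht).1
    rw [h0]
    have : min (u t) (q t - 0) ≤ u t := min_le_left _ _
    linarith
  · push_neg at hz
    obtain ⟨t0, ht0, ht0pos⟩ := hz
    have ht0pos' : 0 < e t0 := ht0pos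
    have key : ∀ t ∈ Icc 1 T, e t + min (u t) (q t - e t) ≤
        q t - (if 0 < e t then I t else 0) := by
      intro t ht
      by_cases hpos : 0 < e t
      · rw [if_pos hpos]
        have h2 := (he t ht).2
        have h3 : e t ≤ q t - I (t-1) := by
          rcases le_or_gt (q t - I (t-1)) 0 with h | h
          · rw [max_eq_left h] at h2; linarith
          · rw [max_eq_right h.le] at h2; exact h2
        have h4 := hstep t ht
        have h5 : min (u t) (q t - e t) ≤ u t := min_le_left _ _
        linarith
      · rw [if_neg hpos]
        have h0 : e t = 0 := le_antisymm (not_lt.1 hpos) (he t ht).1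
        rw [h0]
        have : min (u t) (q t - 0) ≤ q t - 0 := min_le_right _ _
        linarith
    have hsum1 : ∑ t ∈ Icc 1 T, (e t + min (u t) (q t - e t)) ≤
        ∑ t ∈ Icc 1 T, (q t - (if 0 < e t then I t else 0)) := Finset.sum_le_sum key
    rw [Finset.sum_sub_distrib] at hsum1
    have hsingle : I t0 ≤ ∑ t ∈ Icc 1 T, (if 0 < e t then I t else 0) := by
      have h := Finset.single_le_sum (f := fun t => if 0 < e t then I t else 0)
        (fun t ht => by show 0 ≤ (if 0 < e t then I t else 0); split_ifs
                        · exact hInn t (mem_Icc.1 ht).2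
                        · exact le_rfl) ht0
      simp only [if_pos ht0pos'] at h
      exact h
    have hT0 : I T ≤ I t0 := hmono t0 (mem_Icc.1 ht0).2
    have hfin := htel T le_rfl
    linarith

set_option maxHeartbeats 2000000 in
/-- Theorem 4: competitive-ratio upper bound of the Cost-Comparison AdjV-Priority
policy in the single-FDC setting with bounded time-varying variable costs. -/
theorem costComparisonAdjVPriority_competitive
    (n T : ℕ) (hn : 1 ≤ n) (hT : 1 ≤ T)
    (a b : ℝ) (ha : 0 < a) (hab : a ≤ b)
    (f : ℕ → ℝ) (hf0 : 0 ≤ f 0) (hf1 : 0 < f 1)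
    (c : ℕ → ℕ → ℕ → ℝ)
    (hc : ∀ k ∈ Icc 0 1, ∀ t ∈ Icc 1 T, ∀ i ∈ Icc 1 n, a ≤ c k t i ∧ c k t i ≤ b)
    (S : ℕ → ℕ → ℝ) (hS : ∀ t ∈ Icc 1 T, ∀ i ∈ Icc 1 n, 0 ≤ S t i)
    (I0 : ℕ → ℝ) (hI0 : ∀ i ∈ Icc 1 n, 0 ≤ I0 i)
    (m : ℕ → ℕ → ℕ → ℝ)
    (I : ℕ → ℕ → ℝ)
    (hI : ∀ t : ℕ, ∀ i ∈ Icc 1 n, I t i = I0 i - ∑ τ ∈ Icc 1 t, m 1 τ i)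
    (mhat : ℕ → ℕ → ℕ → ℝ)
    (hmhat1 : ∀ t ∈ Icc 1 T, ∀ i ∈ Icc 1 n,
      mhat 1 t i = if c 1 t i < Real.sqrt (a / b) * c 0 t i
        then min (S t i) (I (t - 1) i) else 0)
    (hmhat0 : ∀ t ∈ Icc 1 T, ∀ i ∈ Icc 1 n, mhat 0 t i = S t i - mhat 1 t i)
    (hpolicy : ∀ t ∈ Icc 1 T,
      ((f 0 + ∑ i ∈ Icc 1 n, c 0 t i * S t i <
          f 0 * (if 0 < ∑ i ∈ Icc 1 n, mhat 0 t i then (1:ℝ) else 0)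
          + f 1 * (if 0 < ∑ i ∈ Icc 1 n, mhat 1 t i then (1:ℝ) else 0)
          + ∑ i ∈ Icc 1 n, (c 0 t i * mhat 0 t i + c 1 t i * mhat 1 t i)) →
        (∀ i ∈ Icc 1 n, m 0 t i = S t i ∧ m 1 t i = 0)) ∧
      ((f 0 * (if 0 < ∑ i ∈ Icc 1 n, mhat 0 t i then (1:ℝ) else 0)
          + f 1 * (if 0 < ∑ i ∈ Icc 1 n, mhat 1 t i then (1:ℝ) else 0)
          + ∑ i ∈ Icc 1 n, (c 0 t i * mhat 0 t i + c 1 t i * mhat 1 t i) ≤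
          f 0 + ∑ i ∈ Icc 1 n, c 0 t i * S t i) →
        ∀ k ∈ Icc 0 1, ∀ i ∈ Icc 1 n, m k t i = mhat k t i))
    (mstar : ℕ → ℕ → ℕ → ℝ) (hmstar : feasiblePlan n T S I0 mstar) :
    fulfillCost n T f c m ≤
      (1 + max (f 0 / f 1) (Real.sqrt (b / a))) * fulfillCost n T f c mstar := by
  obtain ⟨hms_nn, hms_sum, hms_bud⟩ := hmstar
  have hk0 : (0:ℕ) ∈ Icc 0 1 := by decide
  have hk1 : (1:ℕ) ∈ Icc 0 1 := by decide
  have h01 : ∀ g : ℕ → ℝ, ∑ k ∈ Icc 0 1, g k = g 0 + g 1 := by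
    intro g
    rw [show Icc (0:ℕ) 1 = {0, 1} by decide,
      Finset.sum_insert (by decide), Finset.sum_singleton]
  set ρ := Real.sqrt (b / a) with hρdef
  have hbpos : 0 < b := lt_of_lt_of_le ha hab
  have hba1 : 1 ≤ b / a := (one_le_div ha).mpr hab
  have hρ1 : 1 ≤ ρ := by
    rw [hρdef, show (1:ℝ) = Real.sqrt 1 from Real.sqrt_one.symm]
    exact Real.sqrt_le_sqrt hba1
  have hρ0 : (0:ℝ) ≤ ρ := by linarith
  have hρpos : (0:ℝ) < ρ := by linarith
  have hsq : ρ^2 = b / a := Real.sq_sqrt (by positivity)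
  have hb_eq : b = ρ^2 * a := by rw [hsq]; field_simp
  have hρab : ρ * Real.sqrt (a / b) = 1 := by
    rw [hρdef, ← Real.sqrt_mul (by positivity), show b / a * (a / b) = 1 by field_simp,
      Real.sqrt_one]
  set μ := max (f 0 / f 1) ρ with hμdef
  have hρμ : ρ ≤ μ := le_max_right _ _
  have hf0μ : f 0 ≤ μ * f 1 := by
    have h : f 0 / f 1 ≤ μ := le_max_left _ _
    exact (div_le_iff₀ hf1).mp h
  have hμ0 : (0:ℝ) ≤ μ := le_trans (by linarith) hρμ
  -- policy disjunction
  have hpol : ∀ t ∈ Icc 1 T,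
      ((f 0 + ∑ i ∈ Icc 1 n, c 0 t i * S t i <
          f 0 * (if 0 < ∑ i ∈ Icc 1 n, mhat 0 t i then (1:ℝ) else 0)
          + f 1 * (if 0 < ∑ i ∈ Icc 1 n, mhat 1 t i then (1:ℝ) else 0)
          + ∑ i ∈ Icc 1 n, (c 0 t i * mhat 0 t i + c 1 t i * mhat 1 t i)) ∧
        ∀ i ∈ Icc 1 n, m 0 t i = S t i ∧ m 1 t i = 0) ∨
      ((f 0 * (if 0 < ∑ i ∈ Icc 1 n, mhat 0 t i then (1:ℝ) else 0)
          + f 1 * (if 0 < ∑ i ∈ Icc 1 n, mhat 1 t i then (1:ℝ) else 0)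
          + ∑ i ∈ Icc 1 n, (c 0 t i * mhat 0 t i + c 1 t i * mhat 1 t i) ≤
          f 0 + ∑ i ∈ Icc 1 n, c 0 t i * S t i) ∧
        ∀ k ∈ Icc 0 1, ∀ i ∈ Icc 1 n, m k t i = mhat k t i) := by
    intro t ht
    by_cases hlt : f 0 + ∑ i ∈ Icc 1 n, c 0 t i * S t i <
        f 0 * (if 0 < ∑ i ∈ Icc 1 n, mhat 0 t i then (1:ℝ) else 0)
        + f 1 * (if 0 < ∑ i ∈ Icc 1 n, mhat 1 t i then (1:ℝ) else 0)
        + ∑ i ∈ Icc 1 n, (c 0 t i * mhat 0 t i + c 1 t i * mhat 1 t i)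
    · exact Or.inl ⟨hlt, (hpolicy t ht).1 hlt⟩
    · exact Or.inr ⟨not_lt.1 hlt, (hpolicy t ht).2 (not_lt.1 hlt)⟩
  -- inventory recursion
  have hI0' : ∀ i ∈ Icc 1 n, I 0 i = I0 i := by
    intro i hi; rw [hI 0 i hi]; simp
  have hstepI : ∀ t ∈ Icc 1 T, ∀ i ∈ Icc 1 n, I t i = I (t-1) i - m 1 t i := by
    intro t ht i hi
    obtain ⟨h1t, htT⟩ := mem_Icc.1 ht
    cases t with
    | zero => omega
    | succ s =>
      rw [hI (s+1) i hi]
      simp only [Nat.add_sub_cancel]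
      rw [hI s i hi, Finset.sum_Icc_succ_top (Nat.le_add_left 1 s)]
      ring
  -- nonneg inventory
  have hInn : ∀ t, t ≤ T → ∀ i ∈ Icc 1 n, 0 ≤ I t i := by
    intro t
    induction t with
    | zero => intro _ i hi; rw [hI0' i hi]; exact hI0 i hi
    | succ s ih =>
      intro hsT i hi
      have hs : s ≤ T := le_trans (Nat.le_succ s) hsT
      have hIs := ih hs i hi
      have hmem : s + 1 ∈ Icc 1 T := mem_Icc.mpr ⟨Nat.succ_le_succ (Nat.zero_le _), hsT⟩
      have hst := hstepI (s+1) hmem i hi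
      simp only [Nat.add_sub_cancel] at hst
      have hmh : mhat 1 (s+1) i ≤ I s i := by
        rw [hmhat1 (s+1) hmem i hi]
        simp only [Nat.add_sub_cancel]
        split_ifs
        · exact min_le_right _ _
        · exact hIs
      have hm1 : m 1 (s+1) i ≤ I s i := by
        rcases hpol (s+1) hmem with ⟨_, h⟩ | ⟨_, h⟩
        · rw [(h i hi).2]; exact hIs
        · rw [h 1 hk1 i hi]; exact hmh
      rw [hst]; linarith
  -- bounds on mhat 1
  have hmhb : ∀ t ∈ Icc 1 T, ∀ i ∈ Icc 1 n,
      0 ≤ mhat 1 t i ∧ mhat 1 t i ≤ S t i := by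
    intro t ht i hi
    have htT := (mem_Icc.1 ht).2
    have hI' : 0 ≤ I (t-1) i := hInn (t-1) (by omega) i hi
    rw [hmhat1 t ht i hi]
    split_ifs
    · exact ⟨le_min (hS t ht i hi) hI', min_le_left _ _⟩
    · exact ⟨le_rfl, hS t ht i hi⟩
  -- bounds on m 1
  have hm1b : ∀ t ∈ Icc 1 T, ∀ i ∈ Icc 1 n,
      0 ≤ m 1 t i ∧ m 1 t i ≤ mhat 1 t i := by
    intro t ht i hi
    rcases hpol t ht with ⟨_, h⟩ | ⟨_, h⟩
    · rw [(h i hi).2]; exact ⟨le_rfl, (hmhb t ht i hi).1⟩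
    · rw [h 1 hk1 i hi]; exact ⟨(hmhb t ht i hi).1, le_rfl⟩
  -- indicator helpers
  have hind_nn : ∀ x : ℝ, (0:ℝ) ≤ (if 0 < x then (1:ℝ) else 0) := by
    intro x; split_ifs <;> norm_num
  have hind_le1 : ∀ x : ℝ, (if 0 < x then (1:ℝ) else 0) ≤ 1 := by
    intro x; split_ifs <;> norm_num
  have hμ1 : (0:ℝ) ≤ 1 + μ := by linarith
  -- the per-period bound
  have hper : ∀ t ∈ Icc 1 T,
      (f 0 * (if 0 < ∑ i ∈ Icc 1 n, m 0 t i then (1:ℝ) else 0)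
        + ∑ i ∈ Icc 1 n, c 0 t i * m 0 t i)
      + (f 1 * (if 0 < ∑ i ∈ Icc 1 n, m 1 t i then (1:ℝ) else 0)
        + ∑ i ∈ Icc 1 n, c 1 t i * m 1 t i)
      ≤ (1 + μ) * (f 0 * (if 0 < ∑ i ∈ Icc 1 n, mstar 0 t i then (1:ℝ) else 0)
          + f 1 * (if 0 < ∑ i ∈ Icc 1 n, mstar 1 t i then (1:ℝ) else 0))
        + ((∑ i ∈ Icc 1 n, (c 0 t i * mstar 0 t i + c 1 t i * mstar 1 t i))
          + ∑ i ∈ Icc 1 n, (c 0 t i * (S t i - mhat 1 t i) + c 1 t i * mhat 1 t i)) := by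
    intro t ht
    have htT := (mem_Icc.1 ht).2
    have hpv_nn : 0 ≤ ∑ i ∈ Icc 1 n, (c 0 t i * (S t i - mhat 1 t i) + c 1 t i * mhat 1 t i) := by
      apply Finset.sum_nonneg
      intro i hi
      have h0 : 0 ≤ c 0 t i := le_trans ha.le (hc 0 hk0 t ht i hi).1
      have h1 : 0 ≤ c 1 t i := le_trans ha.le (hc 1 hk1 t ht i hi).1
      have hb := hmhb t ht i hi
      exact add_nonneg (mul_nonneg h0 (by linarith [hb.2])) (mul_nonneg h1 hb.1)
    have hqvar_nn : 0 ≤ ∑ i ∈ Icc 1 n, (c 0 t i * mstar 0 t i + c 1 t i * mstar 1 t i) := by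
      apply Finset.sum_nonneg
      intro i hi
      have h0 : 0 ≤ c 0 t i := le_trans ha.le (hc 0 hk0 t ht i hi).1
      have h1 : 0 ≤ c 1 t i := le_trans ha.le (hc 1 hk1 t ht i hi).1
      exact add_nonneg (mul_nonneg h0 (hms_nn 0 hk0 t ht i hi))
        (mul_nonneg h1 (hms_nn 1 hk1 t ht i hi))
    have hA0 : 0 ≤ f 0 * (if 0 < ∑ i ∈ Icc 1 n, mstar 0 t i then (1:ℝ) else 0) :=
      mul_nonneg hf0 (hind_nn _)
    have hA1 : 0 ≤ f 1 * (if 0 < ∑ i ∈ Icc 1 n, mstar 1 t i then (1:ℝ) else 0) :=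
      mul_nonneg hf1.le (hind_nn _)
    have hpvsum : ∑ i ∈ Icc 1 n, (c 0 t i * mhat 0 t i + c 1 t i * mhat 1 t i)
        = ∑ i ∈ Icc 1 n, (c 0 t i * (S t i - mhat 1 t i) + c 1 t i * mhat 1 t i) :=
      Finset.sum_congr rfl (fun i hi => by rw [hmhat0 t ht i hi])
    rcases hpol t ht with ⟨hlt, hres⟩ | ⟨hle, heqk⟩
    · -- reset case
      have e1 : ∑ i ∈ Icc 1 n, c 0 t i * m 0 t i = ∑ i ∈ Icc 1 n, c 0 t i * S t i :=
        Finset.sum_congr rfl (fun i hi => by rw [(hres i hi).1])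
      have e2 : ∑ i ∈ Icc 1 n, c 1 t i * m 1 t i = 0 :=
        Finset.sum_eq_zero (fun i hi => by rw [(hres i hi).2, mul_zero])
      have e3 : ∑ i ∈ Icc 1 n, m 1 t i = 0 :=
        Finset.sum_eq_zero (fun i hi => (hres i hi).2)
      rw [e1, e2, e3, if_neg (lt_irrefl (0:ℝ)), mul_zero]
      have hf0ind : f 0 * (if 0 < ∑ i ∈ Icc 1 n, m 0 t i then (1:ℝ) else 0) ≤ f 0 :=
        mul_le_of_le_one_right hf0 (hind_le1 _)
      by_cases hstar : 0 < ∑ i ∈ Icc 1 n, mstar 1 t i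
      · -- m* uses the FDC
        have hkey : ∑ i ∈ Icc 1 n, c 0 t i * S t i
            < f 1 * (if 0 < ∑ i ∈ Icc 1 n, mhat 1 t i then (1:ℝ) else 0)
              + ∑ i ∈ Icc 1 n, (c 0 t i * (S t i - mhat 1 t i) + c 1 t i * mhat 1 t i) := by
          have h2 : f 0 * (if 0 < ∑ i ∈ Icc 1 n, mhat 0 t i then (1:ℝ) else 0) ≤ f 0 :=
            mul_le_of_le_one_right hf0 (hind_le1 _)
          rw [hpvsum] at hlt
          linarith
        have hind1 : (if 0 < ∑ i ∈ Icc 1 n, mstar 1 t i then (1:ℝ) else 0) = 1 := if_pos hstar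
        rw [hind1]
        have hq1 : f 1 ≤ f 0 * (if 0 < ∑ i ∈ Icc 1 n, mstar 0 t i then (1:ℝ) else 0) + f 1 * 1 := by
          have := mul_nonneg hf0 (hind_nn (∑ i ∈ Icc 1 n, mstar 0 t i))
          linarith
        have hmul : (1 + μ) * f 1 ≤ (1 + μ) * (f 0 * (if 0 < ∑ i ∈ Icc 1 n, mstar 0 t i then (1:ℝ) else 0) + f 1 * 1) :=
          mul_le_mul_of_nonneg_left hq1 hμ1
        have hindm1 : f 1 * (if 0 < ∑ i ∈ Icc 1 n, mhat 1 t i then (1:ℝ) else 0) ≤ f 1 :=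
          mul_le_of_le_one_right hf1.le (hind_le1 _)
        have hexp : (1 + μ) * f 1 = f 1 + μ * f 1 := by ring
        linarith [hkey, hmul, hf0ind, hqvar_nn, hf0μ]
      · -- m* pure RDC this period
        have hms1nn : ∀ i ∈ Icc 1 n, 0 ≤ mstar 1 t i := fun i hi => hms_nn 1 hk1 t ht i hi
        have hz : ∑ i ∈ Icc 1 n, mstar 1 t i = 0 :=
          le_antisymm (not_lt.1 hstar) (Finset.sum_nonneg hms1nn)
        have hmz : ∀ i ∈ Icc 1 n, mstar 1 t i = 0 :=
          (Finset.sum_eq_zero_iff_of_nonneg hms1nn).1 hz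
        have e5 : ∑ i ∈ Icc 1 n, (c 0 t i * mstar 0 t i + c 1 t i * mstar 1 t i)
            = ∑ i ∈ Icc 1 n, c 0 t i * S t i := by
          apply Finset.sum_congr rfl
          intro i hi
          have h := hms_sum t ht i hi
          have h2 := hmz i hi
          rw [h2, mul_zero, add_zero]
          congr 1
          linarith
        have e6 : ∑ i ∈ Icc 1 n, mstar 0 t i = ∑ i ∈ Icc 1 n, m 0 t i := by
          apply Finset.sum_congr rfl
          intro i hi
          have h := hms_sum t ht i hi
          have h2 := hmz i hi
          have h3 := (hres i hi).1
          linarith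
        rw [e5, e6]
        have hx0 : 0 ≤ f 0 * (if 0 < ∑ i ∈ Icc 1 n, m 0 t i then (1:ℝ) else 0) :=
          mul_nonneg hf0 (hind_nn _)
        have hx1 : 0 ≤ f 1 * (if 0 < ∑ i ∈ Icc 1 n, mstar 1 t i then (1:ℝ) else 0) :=
          mul_nonneg hf1.le (hind_nn _)
        have hx2 : 0 ≤ μ * (f 0 * (if 0 < ∑ i ∈ Icc 1 n, m 0 t i then (1:ℝ) else 0)
            + f 1 * (if 0 < ∑ i ∈ Icc 1 n, mstar 1 t i then (1:ℝ) else 0)) :=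
          mul_nonneg hμ0 (by linarith)
        have hexp : (1 + μ) * (f 0 * (if 0 < ∑ i ∈ Icc 1 n, m 0 t i then (1:ℝ) else 0)
            + f 1 * (if 0 < ∑ i ∈ Icc 1 n, mstar 1 t i then (1:ℝ) else 0))
            = (f 0 * (if 0 < ∑ i ∈ Icc 1 n, m 0 t i then (1:ℝ) else 0)
            + f 1 * (if 0 < ∑ i ∈ Icc 1 n, mstar 1 t i then (1:ℝ) else 0))
            + μ * (f 0 * (if 0 < ∑ i ∈ Icc 1 n, m 0 t i then (1:ℝ) else 0)
            + f 1 * (if 0 < ∑ i ∈ Icc 1 n, mstar 1 t i then (1:ℝ) else 0)) := by ring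
        linarith [hpv_nn]
    · -- follow-mhat case
      have e1 : ∑ i ∈ Icc 1 n, c 0 t i * m 0 t i = ∑ i ∈ Icc 1 n, c 0 t i * mhat 0 t i :=
        Finset.sum_congr rfl (fun i hi => by rw [heqk 0 hk0 i hi])
      have e2 : ∑ i ∈ Icc 1 n, c 1 t i * m 1 t i = ∑ i ∈ Icc 1 n, c 1 t i * mhat 1 t i :=
        Finset.sum_congr rfl (fun i hi => by rw [heqk 1 hk1 i hi])
      have e3 : ∑ i ∈ Icc 1 n, m 0 t i = ∑ i ∈ Icc 1 n, mhat 0 t i :=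
        Finset.sum_congr rfl (fun i hi => heqk 0 hk0 i hi)
      have e4 : ∑ i ∈ Icc 1 n, m 1 t i = ∑ i ∈ Icc 1 n, mhat 1 t i :=
        Finset.sum_congr rfl (fun i hi => heqk 1 hk1 i hi)
      rw [e1, e2, e3, e4]
      have hsplit : ∑ i ∈ Icc 1 n, c 0 t i * mhat 0 t i + ∑ i ∈ Icc 1 n, c 1 t i * mhat 1 t i
          = ∑ i ∈ Icc 1 n, (c 0 t i * (S t i - mhat 1 t i) + c 1 t i * mhat 1 t i) := by
        rw [← hpvsum, ← Finset.sum_add_distrib]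
      have hf0ind : f 0 * (if 0 < ∑ i ∈ Icc 1 n, mhat 0 t i then (1:ℝ) else 0) ≤ f 0 :=
        mul_le_of_le_one_right hf0 (hind_le1 _)
      by_cases hstar : 0 < ∑ i ∈ Icc 1 n, mstar 1 t i
      · have hind1 : (if 0 < ∑ i ∈ Icc 1 n, mstar 1 t i then (1:ℝ) else 0) = 1 := if_pos hstar
        rw [hind1]
        have hq1 : f 1 ≤ f 0 * (if 0 < ∑ i ∈ Icc 1 n, mstar 0 t i then (1:ℝ) else 0) + f 1 * 1 := by
          have := mul_nonneg hf0 (hind_nn (∑ i ∈ Icc 1 n, mstar 0 t i))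
          linarith
        have hmul : (1 + μ) * f 1 ≤ (1 + μ) * (f 0 * (if 0 < ∑ i ∈ Icc 1 n, mstar 0 t i then (1:ℝ) else 0) + f 1 * 1) :=
          mul_le_mul_of_nonneg_left hq1 hμ1
        have hindm1 : f 1 * (if 0 < ∑ i ∈ Icc 1 n, mhat 1 t i then (1:ℝ) else 0) ≤ f 1 :=
          mul_le_of_le_one_right hf1.le (hind_le1 _)
        have hexp : (1 + μ) * f 1 = f 1 + μ * f 1 := by ring
        linarith [hsplit, hf0ind, hqvar_nn, hmul, hindm1, hf0μ]
      · -- m* pure RDC this period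
        have hms1nn : ∀ i ∈ Icc 1 n, 0 ≤ mstar 1 t i := fun i hi => hms_nn 1 hk1 t ht i hi
        have hz : ∑ i ∈ Icc 1 n, mstar 1 t i = 0 :=
          le_antisymm (not_lt.1 hstar) (Finset.sum_nonneg hms1nn)
        have hmz : ∀ i ∈ Icc 1 n, mstar 1 t i = 0 :=
          (Finset.sum_eq_zero_iff_of_nonneg hms1nn).1 hz
        have e5 : ∑ i ∈ Icc 1 n, (c 0 t i * mstar 0 t i + c 1 t i * mstar 1 t i)
            = ∑ i ∈ Icc 1 n, c 0 t i * S t i := by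
          apply Finset.sum_congr rfl
          intro i hi
          have h := hms_sum t ht i hi
          have h2 := hmz i hi
          rw [h2, mul_zero, add_zero]
          congr 1
          linarith
        rw [e5, hz, if_neg (lt_irrefl (0:ℝ)), mul_zero, add_zero]
        by_cases hSpos : 0 < ∑ i ∈ Icc 1 n, S t i
        · have e6 : (0:ℝ) < ∑ i ∈ Icc 1 n, mstar 0 t i := by
            have heq : ∑ i ∈ Icc 1 n, mstar 0 t i = ∑ i ∈ Icc 1 n, S t i := by
              apply Finset.sum_congr rfl
              intro i hi
              have h := hms_sum t ht i hi
              have h2 := hmz i hi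
              linarith
            rw [heq]; exact hSpos
          rw [if_pos e6]
          rw [Finset.sum_add_distrib] at hle
          have hmu : f 0 ≤ (1 + μ) * (f 0 * 1) := by nlinarith [mul_nonneg hμ0 hf0]
          linarith [hle, hpv_nn, hsplit]
        · -- no demand at all this period
          have hSnn : ∀ i ∈ Icc 1 n, 0 ≤ S t i := fun i hi => hS t ht i hi
          have hSz : ∀ i ∈ Icc 1 n, S t i = 0 := by
            have hq : ∑ i ∈ Icc 1 n, S t i = 0 :=
              le_antisymm (not_lt.1 hSpos) (Finset.sum_nonneg hSnn)
            exact (Finset.sum_eq_zero_iff_of_nonneg hSnn).1 hq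
          have hmh1z : ∀ i ∈ Icc 1 n, mhat 1 t i = 0 := by
            intro i hi
            have hb := hmhb t ht i hi
            have := hSz i hi
            linarith [hb.1, hb.2]
          have hmh0z : ∀ i ∈ Icc 1 n, mhat 0 t i = 0 := by
            intro i hi
            rw [hmhat0 t ht i hi, hSz i hi, hmh1z i hi]
            ring
          have z1 : ∑ i ∈ Icc 1 n, c 0 t i * mhat 0 t i = 0 :=
            Finset.sum_eq_zero (fun i hi => by rw [hmh0z i hi, mul_zero])
          have z2 : ∑ i ∈ Icc 1 n, c 1 t i * mhat 1 t i = 0 :=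
            Finset.sum_eq_zero (fun i hi => by rw [hmh1z i hi, mul_zero])
          have z3 : ∑ i ∈ Icc 1 n, mhat 0 t i = 0 :=
            Finset.sum_eq_zero hmh0z
          have z4 : ∑ i ∈ Icc 1 n, mhat 1 t i = 0 :=
            Finset.sum_eq_zero hmh1z
          have z5 : ∑ i ∈ Icc 1 n, c 0 t i * S t i = 0 :=
            Finset.sum_eq_zero (fun i hi => by rw [hSz i hi, mul_zero])
          rw [z1, z2, z3, z4, z5, if_neg (lt_irrefl (0:ℝ))]
          have hy : 0 ≤ f 0 * (if 0 < ∑ i ∈ Icc 1 n, mstar 0 t i then (1:ℝ) else 0) :=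
            mul_nonneg hf0 (hind_nn _)
          have hy2 : 0 ≤ (1 + μ) * (f 0 * (if 0 < ∑ i ∈ Icc 1 n, mstar 0 t i then (1:ℝ) else 0) + f 1 * 0) := by
            apply mul_nonneg hμ1
            linarith
          linarith [hpv_nn]
  -- amortized variable-cost bound
  have hlam_nn : 0 ≤ ρ*(ρ-1)*a := mul_nonneg (mul_nonneg hρ0 (by linarith)) ha.le
  have hcore : ∑ t ∈ Icc 1 T, ∑ i ∈ Icc 1 n, (c 0 t i * (S t i - mhat 1 t i) + c 1 t i * mhat 1 t i)
      ≤ ρ * ∑ t ∈ Icc 1 T, ∑ i ∈ Icc 1 n, (c 0 t i * mstar 0 t i + c 1 t i * mstar 1 t i) := by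
    have hswap1 : (∑ t ∈ Icc 1 T, ∑ i ∈ Icc 1 n, (c 0 t i * (S t i - mhat 1 t i) + c 1 t i * mhat 1 t i))
        = ∑ i ∈ Icc 1 n, ∑ t ∈ Icc 1 T, (c 0 t i * (S t i - mhat 1 t i) + c 1 t i * mhat 1 t i) :=
      Finset.sum_comm
    have hswap2 : (∑ t ∈ Icc 1 T, ∑ i ∈ Icc 1 n, (c 0 t i * mstar 0 t i + c 1 t i * mstar 1 t i))
        = ∑ i ∈ Icc 1 n, ∑ t ∈ Icc 1 T, (c 0 t i * mstar 0 t i + c 1 t i * mstar 1 t i) :=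
      Finset.sum_comm
    rw [hswap1, hswap2, Finset.mul_sum]
    apply Finset.sum_le_sum
    intro i hi
    set ee : ℕ → ℝ := fun t => if c 1 t i < Real.sqrt (a / b) * c 0 t i
      then max 0 (mstar 1 t i - I (t-1) i) else 0 with heedef
    have hcomb : ∑ t ∈ Icc 1 T, (ee t + min (m 1 t i) (mstar 1 t i - ee t))
        ≤ ∑ t ∈ Icc 1 T, m 1 t i := by
      have := comb_lemma T (fun t => I t i) (fun t => m 1 t i) (fun t => mstar 1 t i) ee
        (fun t ht => hstepI t ht i hi)
        (fun t ht => (hm1b t ht i hi).1)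
        (fun t ht => hms_nn 1 hk1 t ht i hi)
        (fun t ht => by
          constructor
          · simp only [heedef]; split_ifs
            · exact le_max_left _ _
            · exact le_rfl
          · simp only [heedef]; split_ifs
            · exact le_rfl
            · exact le_max_left _ _)
        (by show ∑ t ∈ Icc 1 T, mstar 1 t i ≤ I 0 i
            rw [hI0' i hi]; exact hms_bud i hi)
        (hInn T le_rfl i hi)
      simpa using this
    have hptw : ∀ t ∈ Icc 1 T,
        (c 0 t i * (S t i - mhat 1 t i) + c 1 t i * mhat 1 t i)
          + (ρ*(ρ-1)*a) * ((m 1 t i - min (m 1 t i) (mstar 1 t i - ee t)) - ee t)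
        ≤ ρ * (c 0 t i * mstar 0 t i + c 1 t i * mstar 1 t i) := by
      intro t ht
      have hc0 := hc 0 hk0 t ht i hi
      have hc1 := hc 1 hk1 t ht i hi
      have htT := (mem_Icc.1 ht).2
      have hI' : 0 ≤ I (t-1) i := hInn (t-1) (by omega) i hi
      have hq0 := hms_nn 0 hk0 t ht i hi
      have hq1 := hms_nn 1 hk1 t ht i hi
      have hsum := hms_sum t ht i hi
      have hm1 := hm1b t ht i hi
      have hSx : S t i = mstar 0 t i + mstar 1 t i := hsum.symm
      by_cases hattr : c 1 t i < Real.sqrt (a / b) * c 0 t i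
      · have hmh : mhat 1 t i = min (S t i) (I (t-1) i) := by
          rw [hmhat1 t ht i hi, if_pos hattr]
        have heV : ee t = max 0 (mstar 1 t i - I (t-1) i) := by
          simp only [heedef]; rw [if_pos hattr]
        have hattr2 : ρ * c 1 t i ≤ c 0 t i := by
          have h2 : ρ * c 1 t i < ρ * (Real.sqrt (a / b) * c 0 t i) :=
            mul_lt_mul_of_pos_left hattr hρpos
          have h3 : ρ * (Real.sqrt (a / b) * c 0 t i) = c 0 t i := by
            rw [← mul_assoc, hρab, one_mul]
          linarith
        have hkey := attr_ineq ρ a (c 0 t i) (c 1 t i) (I (t-1) i) (mstar 0 t i)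
          (mstar 1 t i) (m 1 t i) hρ1 ha hc1.1 (by rw [← hb_eq]; exact hc0.2) hattr2
          hI' hq0 hq1 hm1.1 (by rw [← hSx, ← hmh]; exact hm1.2)
        rw [hmh, heV, hSx]
        linarith [hkey]
      · have hmh : mhat 1 t i = 0 := by rw [hmhat1 t ht i hi, if_neg hattr]
        have heV : ee t = 0 := by simp only [heedef]; rw [if_neg hattr]
        have hm1z : m 1 t i = 0 := by
          have := hm1.2
          rw [hmh] at this
          linarith [hm1.1]
        have hc0le : c 0 t i ≤ ρ * c 1 t i := by
          have h2 : Real.sqrt (a / b) * c 0 t i ≤ c 1 t i := not_lt.1 hattr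
          have h3 : ρ * (Real.sqrt (a / b) * c 0 t i) ≤ ρ * c 1 t i :=
            mul_le_mul_of_nonneg_left h2 hρ0
          rw [← mul_assoc, hρab, one_mul] at h3
          exact h3
        rw [hmh, heV, hm1z]
        have hz2 : ((0:ℝ) - min (0:ℝ) (mstar 1 t i - 0)) - 0 = 0 := by
          rw [min_eq_left (by linarith : (0:ℝ) ≤ mstar 1 t i - 0)]
          ring
        rw [hz2, mul_zero, add_zero]
        have c0nn : 0 ≤ c 0 t i := le_trans ha.le hc0.1
        have h1 : 0 ≤ (ρ - 1) * (c 0 t i * mstar 0 t i) :=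
          mul_nonneg (by linarith) (mul_nonneg c0nn hq0)
        have h2 : c 0 t i * mstar 1 t i ≤ ρ * c 1 t i * mstar 1 t i :=
          mul_le_mul_of_nonneg_right hc0le hq1
        have h3 : c 0 t i * S t i = c 0 t i * mstar 0 t i + c 0 t i * mstar 1 t i := by
          rw [hSx]; ring
        have h4 : ρ * (c 0 t i * mstar 0 t i + c 1 t i * mstar 1 t i)
            = c 0 t i * mstar 0 t i + (ρ - 1) * (c 0 t i * mstar 0 t i)
              + ρ * c 1 t i * mstar 1 t i := by ring
        linarith
    have h1 := Finset.sum_le_sum hptw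
    rw [Finset.sum_add_distrib, ← Finset.mul_sum, ← Finset.mul_sum] at h1
    have hx : 0 ≤ ∑ t ∈ Icc 1 T, ((m 1 t i - min (m 1 t i) (mstar 1 t i - ee t)) - ee t) := by
      rw [Finset.sum_sub_distrib, Finset.sum_sub_distrib]
      rw [Finset.sum_add_distrib] at hcomb
      linarith [hcomb]
    have h5 := mul_nonneg hlam_nn hx
    linarith [h1, h5]
  -- put everything together
  have hq_nn : 0 ≤ ∑ t ∈ Icc 1 T, ∑ i ∈ Icc 1 n, (c 0 t i * mstar 0 t i + c 1 t i * mstar 1 t i) := by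
    apply Finset.sum_nonneg
    intro t ht
    apply Finset.sum_nonneg
    intro i hi
    have h0 : 0 ≤ c 0 t i := le_trans ha.le (hc 0 hk0 t ht i hi).1
    have h1 : 0 ≤ c 1 t i := le_trans ha.le (hc 1 hk1 t ht i hi).1
    exact add_nonneg (mul_nonneg h0 (hms_nn 0 hk0 t ht i hi))
      (mul_nonneg h1 (hms_nn 1 hk1 t ht i hi))
  have hLHS : fulfillCost n T f c m = ∑ t ∈ Icc 1 T,
      ((f 0 * (if 0 < ∑ i ∈ Icc 1 n, m 0 t i then (1:ℝ) else 0)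
        + ∑ i ∈ Icc 1 n, c 0 t i * m 0 t i)
      + (f 1 * (if 0 < ∑ i ∈ Icc 1 n, m 1 t i then (1:ℝ) else 0)
        + ∑ i ∈ Icc 1 n, c 1 t i * m 1 t i)) := by
    unfold fulfillCost
    exact Finset.sum_congr rfl (fun t _ => h01 _)
  have hRHS : fulfillCost n T f c mstar = ∑ t ∈ Icc 1 T,
      ((f 0 * (if 0 < ∑ i ∈ Icc 1 n, mstar 0 t i then (1:ℝ) else 0)
        + f 1 * (if 0 < ∑ i ∈ Icc 1 n, mstar 1 t i then (1:ℝ) else 0))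
      + ∑ i ∈ Icc 1 n, (c 0 t i * mstar 0 t i + c 1 t i * mstar 1 t i)) := by
    unfold fulfillCost
    apply Finset.sum_congr rfl
    intro t _
    rw [h01]
    rw [Finset.sum_add_distrib]
    ring
  rw [hLHS, hRHS]
  have h2 := Finset.sum_le_sum hper
  have hsplitR : (∑ t ∈ Icc 1 T, ((1 + μ) * (f 0 * (if 0 < ∑ i ∈ Icc 1 n, mstar 0 t i then (1:ℝ) else 0)
          + f 1 * (if 0 < ∑ i ∈ Icc 1 n, mstar 1 t i then (1:ℝ) else 0))
        + ((∑ i ∈ Icc 1 n, (c 0 t i * mstar 0 t i + c 1 t i * mstar 1 t i))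
          + ∑ i ∈ Icc 1 n, (c 0 t i * (S t i - mhat 1 t i) + c 1 t i * mhat 1 t i))))
      = (1 + μ) * (∑ t ∈ Icc 1 T, (f 0 * (if 0 < ∑ i ∈ Icc 1 n, mstar 0 t i then (1:ℝ) else 0)
          + f 1 * (if 0 < ∑ i ∈ Icc 1 n, mstar 1 t i then (1:ℝ) else 0)))
        + ((∑ t ∈ Icc 1 T, ∑ i ∈ Icc 1 n, (c 0 t i * mstar 0 t i + c 1 t i * mstar 1 t i))
          + ∑ t ∈ Icc 1 T, ∑ i ∈ Icc 1 n, (c 0 t i * (S t i - mhat 1 t i) + c 1 t i * mhat 1 t i)) := by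
    rw [Finset.sum_add_distrib, Finset.sum_add_distrib, Finset.mul_sum]
  rw [hsplitR] at h2
  have h6 : (∑ t ∈ Icc 1 T, ((f 0 * (if 0 < ∑ i ∈ Icc 1 n, mstar 0 t i then (1:ℝ) else 0)
        + f 1 * (if 0 < ∑ i ∈ Icc 1 n, mstar 1 t i then (1:ℝ) else 0))
      + ∑ i ∈ Icc 1 n, (c 0 t i * mstar 0 t i + c 1 t i * mstar 1 t i)))
      = (∑ t ∈ Icc 1 T, (f 0 * (if 0 < ∑ i ∈ Icc 1 n, mstar 0 t i then (1:ℝ) else 0)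
        + f 1 * (if 0 < ∑ i ∈ Icc 1 n, mstar 1 t i then (1:ℝ) else 0)))
      + ∑ t ∈ Icc 1 T, ∑ i ∈ Icc 1 n, (c 0 t i * mstar 0 t i + c 1 t i * mstar 1 t i) :=
    Finset.sum_add_distrib
  rw [h6, mul_add]
  have h3 : ρ * (∑ t ∈ Icc 1 T, ∑ i ∈ Icc 1 n, (c 0 t i * mstar 0 t i + c 1 t i * mstar 1 t i))
      ≤ μ * (∑ t ∈ Icc 1 T, ∑ i ∈ Icc 1 n, (c 0 t i * mstar 0 t i + c 1 t i * mstar 1 t i)) :=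
    mul_le_mul_of_nonneg_right hρμ hq_nn
  have h4 : (1 + μ) * (∑ t ∈ Icc 1 T, ∑ i ∈ Icc 1 n, (c 0 t i * mstar 0 t i + c 1 t i * mstar 1 t i))
      = (∑ t ∈ Icc 1 T, ∑ i ∈ Icc 1 n, (c 0 t i * mstar 0 t i + c 1 t i * mstar 1 t i))
        + μ * (∑ t ∈ Icc 1 T, ∑ i ∈ Icc 1 n, (c 0 t i * mstar 0 t i + c 1 t i * mstar 1 t i)) := by
    ring
  linarith [h2, hcore, h3, h4]
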